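/- arXiv:1811.02311 — 2 statements merged into one kernel-verified Lean document; each statement's English description precedes it below -/
import Mathlib

section
/- In a perfect REL-algebra, if a is an atom with a ≤ 1', then a⌣ ≠ 0, 1';a ≠ 0, a;1' ≠ 0, and a = a⌣ = Sa = Ea. -/
class PerfectREL (α : Type*) [CompleteBooleanAlgebra α] [IsAtomic α] where
  comp : α → α → α
  conv : α → α
  id' : α
  ax2 : ∀ x y : α, conv (x ⊓ conv y) = conv x ⊓ y
  ax3l : ∀ x y z : α, comp (x ⊔ y) z = comp x z ⊔ comp y z
  ax3r : ∀ x y z : α, comp x (y ⊔ z) = comp x y ⊔ comp x z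
  ax4l : comp (⊤ : α) ⊥ = ⊥
  ax4r : comp (⊥ : α) ⊤ = ⊥
  ax5l : ∀ x y z : α, comp (conv x) y ⊓ z = comp (conv x) (y ⊓ comp (conv (conv x)) z) ⊓ z
  ax5r : ∀ x y z : α, comp x (conv y) ⊓ z = comp (x ⊓ comp z (conv (conv y))) (conv y) ⊓ z
  ax6l : ∀ x : α, comp id' x ≤ x
  ax6r : ∀ x : α, comp x id' ≤ x
  ax7 : comp (id' : α) id' = id'
  ax8 : comp ((conv (⊤ : α))ᶜ) ((conv (⊤ : α))ᶜ) ⊓ id' = ⊥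
  ax9a : ∀ x y z : α, comp (comp (x ⊓ id') y) z = comp (x ⊓ id') (comp y z)
  ax9b : ∀ x y z : α, comp (comp x (y ⊓ id')) z = comp x (comp (y ⊓ id') z)
  ax9c : ∀ x y z : α, comp (comp x y) (z ⊓ id') = comp x (comp y (z ⊓ id'))
  conv_sSup : ∀ S : Set α, conv (sSup S) = ⨆ x ∈ S, conv x
  comp_sSup_left : ∀ (S : Set α) (y : α), comp (sSup S) y = ⨆ x ∈ S, comp x y
  comp_sSup_right : ∀ (x : α) (S : Set α), comp x (sSup S) = ⨆ y ∈ S, comp x y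

open PerfectREL

variable {α : Type*} [CompleteBooleanAlgebra α] [IsAtomic α] [PerfectREL α]

private lemma my_comp_bot_left (y : α) : comp (⊥ : α) y = ⊥ := by
  have := comp_sSup_left (∅ : Set α) y
  simpa using this

private lemma my_comp_bot_right (x : α) : comp x (⊥ : α) = ⊥ := by
  have := comp_sSup_right x (∅ : Set α)
  simpa using this

private lemma my_conv_bot : conv (⊥ : α) = ⊥ := by
  have := conv_sSup (∅ : Set α)
  simpa using this

private lemma my_comp_sup_eq (x x' y : α) :
    comp (x ⊔ x') y = comp x y ⊔ comp x' y := ax3l x x' y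

private lemma my_comp_mono_left {x x' : α} (hxx : x ≤ x') (y : α) :
    comp x y ≤ comp x' y := by
  have : comp x' y = comp x y ⊔ comp x' y := by
    rw [← ax3l, sup_eq_right.mpr hxx]
  rw [this]; exact le_sup_left

private lemma my_comp_mono_right (x : α) {y y' : α} (hyy : y ≤ y') :
    comp x y ≤ comp x y' := by
  have : comp x y' = comp x y ⊔ comp x y' := by
    rw [← ax3r, sup_eq_right.mpr hyy]
  rw [this]; exact le_sup_left

private lemma my_conv_mono {x x' : α} (hxx : x ≤ x') : conv x ≤ conv x' := by
  have hsup : conv (x ⊔ x') = conv x ⊔ conv x' := by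
    have h0 := conv_sSup ({x, x'} : Set α)
    rw [sSup_pair, iSup_pair] at h0
    exact h0
  have : conv x' = conv x ⊔ conv x' := by
    rw [← hsup, sup_eq_right.mpr hxx]
  rw [this]; exact le_sup_left

private lemma my_conv_conv (y : α) : conv (conv y) = conv (⊤ : α) ⊓ y := by
  have := ax2 (⊤ : α) y
  simpa using this

private lemma my_atom_cases {a x : α} (ha : IsAtom a) : a ⊓ x = ⊥ ∨ a ≤ x := by
  rcases ha.le_iff.mp (inf_le_left : a ⊓ x ≤ a) with h1 | h1
  · exact Or.inl h1
  · exact Or.inr (by rw [← h1]; exact inf_le_right)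

theorem identity_atoms (a : α) (ha : IsAtom a) (h : a ≤ id') :
    conv a ≠ (⊥ : α) ∧ comp id' a ≠ (⊥ : α) ∧ comp a id' ≠ (⊥ : α) ∧
      conv a = a ∧ comp a a = a ∧
      (∀ e : α, IsAtom e → e ≤ id' → comp e a = a → e = a) ∧
      (∀ e : α, IsAtom e → e ≤ id' → comp a e = a → e = a) := by
  have hbot : a ≠ ⊥ := ha.1
  -- comp a a ≤ a
  have hle1 : comp a a ≤ a := le_trans (my_comp_mono_left h a) (ax6l a)
  -- a ≤ comp a a
  have hsq : comp a a = a := by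
    set f : α := id' ⊓ aᶜ with hf
    have hid : (id' : α) = a ⊔ f := by
      rw [hf, sup_inf_left, sup_compl_eq_top, inf_top_eq, sup_eq_right.mpr h]
    have hfle : f ≤ id' := inf_le_left
    have haf : a ⊓ f = ⊥ := by
      rw [hf, inf_comm id' aᶜ, ← inf_assoc, inf_compl_eq_bot, bot_inf_eq]
    have haf' : comp a f ≤ f := le_trans (my_comp_mono_left h f) (ax6l f)
    have hfa' : comp f a ≤ a := le_trans (my_comp_mono_left hfle a) (ax6l a)
    have hfa'' : comp f a ≤ f := le_trans (my_comp_mono_right f h) (ax6r f)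
    have hffle : comp f f ≤ f := le_trans (my_comp_mono_left hfle f) (ax6l f)
    have hsplit : (id' : α) = comp a a ⊔ comp a f ⊔ (comp f a ⊔ comp f f) := by
      conv_lhs => rw [← ax7, hid, ax3l, ax3r, ax3r]
    have hle2 : (id' : α) ≤ comp a a ⊔ f :=
      hsplit.le.trans (sup_le_sup (sup_le_sup le_rfl haf')
        (sup_le_sup hfa'' hffle) |>.trans (by simp))
    have : a ≤ comp a a ⊔ f := le_trans h hle2
    have hdist : a = (a ⊓ comp a a) ⊔ (a ⊓ f) := by
      rw [← inf_sup_left, inf_eq_left.mpr this]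
    have : a ≤ comp a a := by
      rw [haf, sup_bot_eq] at hdist
      exact hdist.trans_le inf_le_right
    exact le_antisymm hle1 this
  -- a ≤ conv ⊤
  have hatop : a ≤ conv (⊤ : α) := by
    rcases my_atom_cases (x := conv (⊤ : α)) ha with h0 | h0
    · exfalso
      have hc : a ≤ (conv (⊤ : α))ᶜ := disjoint_iff.mpr h0 |>.le_compl_right
      have : a ≤ comp ((conv (⊤ : α))ᶜ) ((conv (⊤ : α))ᶜ) ⊓ id' := by
        refine le_inf ?_ h
        calc a = comp a a := hsq.symm
          _ ≤ _ := le_trans (my_comp_mono_left hc _) (my_comp_mono_right _ hc)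
      rw [ax8] at this
      exact hbot (le_bot_iff.mp this)
    · exact h0
  have hcc : conv (conv a) = a := by
    rw [my_conv_conv, inf_eq_right.mpr hatop]
  -- a ≤ comp a (conv a)
  have hkey : a ≤ comp a (conv a) := by
    have h5 := ax5r a (conv a) a
    rw [hcc, hsq, inf_idem] at h5
    rcases my_atom_cases (x := comp a (conv a)) ha with h0 | h0
    · exfalso
      rw [h0, my_comp_bot_left, bot_inf_eq] at h5
      exact hbot h5
    · exact h0
  -- a ≤ conv a
  have hac : a ≤ conv a := le_trans hkey (le_trans (my_comp_mono_left h _) (ax6l _))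
  -- conv a = a
  have hconv : conv a = a := by
    have h2 := ax2 (conv a) (conv a)
    rw [hcc, inf_eq_right.mpr hac, inf_eq_left.mpr hac] at h2
    exact h2
  refine ⟨by rw [hconv]; exact hbot, ?_, ?_, hconv, hsq, ?_, ?_⟩
  · intro hz
    have : a ≤ comp id' a := le_trans hsq.ge (my_comp_mono_left h a)
    exact hbot (le_bot_iff.mp (hz ▸ this))
  · intro hz
    have : a ≤ comp a id' := le_trans hsq.ge (my_comp_mono_right a h)
    exact hbot (le_bot_iff.mp (hz ▸ this))
  · intro e he hei hea
    have : a ≤ e := hea ▸ le_trans (my_comp_mono_right e h) (ax6r e)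
    rcases he.le_iff.mp this with h1 | h1
    · exact absurd h1 hbot
    · exact h1.symm
  · intro e he hei hea
    have : a ≤ e := hea ▸ le_trans (my_comp_mono_left h e) (ax6l e)
    rcases he.le_iff.mp this with h1 | h1
    · exact absurd h1 hbot
    · exact h1.symm
end

section
/- In a perfect REL-algebra, let a be an atom with a ≤ b;c for atoms b, c, and suppose b ≤ 1'. Then a = c and b is an atom e ≤ 1' with e;a = a; in particular 1';a ≠ 0 and Sa = b. -/
open PerfectREL

variable {α : Type*} [CompleteBooleanAlgebra α] [IsAtomic α] [PerfectREL α]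

private lemma comp_mono_left (x y z : α) (h : x ≤ y) : comp x z ≤ comp y z := by
  calc comp x z ≤ comp x z ⊔ comp y z := le_sup_left
    _ = comp (x ⊔ y) z := (ax3l x y z).symm
    _ = comp y z := by rw [sup_eq_right.mpr h]

private lemma comp_mono_right (x y z : α) (h : y ≤ z) : comp x y ≤ comp x z := by
  calc comp x y ≤ comp x y ⊔ comp x z := le_sup_left
    _ = comp x (y ⊔ z) := (ax3r x y z).symm
    _ = comp x z := by rw [sup_eq_right.mpr h]

private lemma bot_comp (x : α) : comp (⊥ : α) x = ⊥ :=
  le_bot_iff.mp (le_of_le_of_eq (comp_mono_right ⊥ x ⊤ le_top) ax4r)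

theorem subidentity_left_factor (a b c : α) (ha : IsAtom a) (hb : IsAtom b)
    (hc : IsAtom c) (h : a ≤ comp b c) (hid : b ≤ id') :
    a = c ∧ comp b a = a ∧ comp id' a ≠ (⊥ : α) ∧
      ∀ e : α, IsAtom e → e ≤ id' → comp e a = a → e = b := by
  have hac : a = c := by
    have h1 : a ≤ c := le_trans h (le_trans (comp_mono_left b id' c hid) (ax6l c))
    rcases hc.le_iff.mp h1 with h2 | h2
    · exact absurd h2 ha.1
    · exact h2
  have hba : comp b a = a := by
    apply le_antisymm
    · exact le_trans (comp_mono_left b id' a hid) (ax6l a)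
    · exact le_trans h (le_of_eq (congrArg (comp b) hac.symm))
  have hne : comp id' a ≠ (⊥ : α) := by
    intro h0
    have : comp b a ≤ (⊥ : α) := h0 ▸ comp_mono_left b id' a hid
    exact ha.1 (le_bot_iff.mp (hba ▸ this))
  refine ⟨hac, hba, hne, ?_⟩
  intro e he heid hea
  by_contra hne'
  have hdisj : e ⊓ b = ⊥ := by
    rcases he.le_iff.mp (inf_le_left : e ⊓ b ≤ e) with h2 | h2
    · exact h2
    · have heb' : e ≤ b := h2 ▸ (inf_le_right : e ⊓ b ≤ b)
      exact absurd ((hb.le_iff.mp heb').resolve_left he.1) hne'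
  have heb : comp e b = ⊥ := by
    have h1 : comp e b ≤ e := le_trans (comp_mono_right e b id' hid) (ax6r e)
    have h2 : comp e b ≤ b := le_trans (comp_mono_left e id' b heid) (ax6l b)
    exact le_bot_iff.mp (hdisj ▸ le_inf h1 h2)
  have key : comp (comp e b) a = a := by
    have hei : e ⊓ id' = e := inf_eq_left.mpr heid
    calc comp (comp e b) a = comp (comp (e ⊓ id') b) a := by rw [hei]
      _ = comp (e ⊓ id') (comp b a) := ax9a e b a
      _ = comp e (comp b a) := by rw [hei]
      _ = a := by rw [hba, hea]
  rw [heb, bot_comp] at key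
  exact ha.1 key.symm
end
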